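/- arXiv:2401.07003 — 2 statements merged into one kernel-verified Lean document; each statement's English description precedes it below -/
import Mathlib

section
/- Let η_l := 2l/(4^l (2l+1)!) for l ∈ ℕ, and define δ_l recursively by δ_l = η_l − Σ_{b=1}^{l−1} η_{l−b} δ_b/(2l−2b). Then Σ_{l=1}^∞ 4^l |δ_l| ≤ 6/5. -/
/-!
Write `θ_k = 2^k / (2k+1)!`, so that `η_k = 2k θ_k 8^{-k}` and the kernel of the recursion is
`η_k / (2k) = θ_k 8^{-k}`. By strong induction `|δ_l| ≤ 8^{-l}` as soon as
`2l θ_l + θ_1 + ⋯ + θ_{l-1} ≤ 1` for every `l ≥ 1`. This quantity is non-increasing in `l`,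
because `2(l+1) θ_{l+1} = 2θ_l / (2l+3) ≤ θ_l`, and equals `2/3` at `l = 1`.
Hence `∑ 4^l |δ_l| ≤ ∑ 2^{-l} = 1`.
-/

open Finset

theorem abs_le_pow_of_eq_sub_sum {R : Type*} [CommRing R] [LinearOrder R] [IsStrictOrderedRing R]
    {e κ x c : ℕ → R} {r : R}
    (hx : ∀ l, 1 ≤ l → x l = e l - ∑ b ∈ Ico 1 l, κ (l - b) * x b)
    (hκ : ∀ k, |κ k| ≤ c k * r ^ k)
    (he : ∀ l, 1 ≤ l → |e l| + (∑ k ∈ Ico 1 l, c k) * r ^ l ≤ r ^ l) :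
    ∀ l, 1 ≤ l → |x l| ≤ r ^ l := by
  intro l
  induction l using Nat.strong_induction_on with
  | _ l ih =>
  intro hl
  have hterm : ∀ b ∈ Ico 1 l, |κ (l - b) * x b| ≤ c (l - b) * r ^ l := by
    intro b hb
    obtain ⟨hb1, hbl⟩ := mem_Ico.mp hb
    calc |κ (l - b) * x b| = |κ (l - b)| * |x b| := abs_mul _ _
      _ ≤ c (l - b) * r ^ (l - b) * r ^ b :=
          mul_le_mul (hκ _) (ih b hbl hb1) (abs_nonneg _) ((abs_nonneg _).trans (hκ _))
      _ = c (l - b) * r ^ l := by rw [mul_assoc, ← pow_add, Nat.sub_add_cancel hbl.le]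
  have hreflect : ∑ b ∈ Ico 1 l, c (l - b) = ∑ k ∈ Ico 1 l, c k := by
    rw [sum_Ico_reflect c 1 (Nat.le_succ l), Nat.add_sub_cancel_left, Nat.add_sub_cancel]
  calc |x l| ≤ |e l| + |∑ b ∈ Ico 1 l, κ (l - b) * x b| := by
        rw [hx l hl]; exact abs_sub _ _
    _ ≤ |e l| + (∑ k ∈ Ico 1 l, c k) * r ^ l := by
        gcongr
        rw [← hreflect, sum_mul]
        exact (abs_sum_le_sum_abs _ _).trans (sum_le_sum hterm)
    _ ≤ r ^ l := he l hl

/-- `θ_k`: the kernel `η_k / (2k)` of the recursion, rescaled by `8^k`. -/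
noncomputable def rescaledKernel (k : ℕ) : ℝ := 2 ^ k / (2 * k + 1).factorial

lemma rescaledKernel_nonneg (k : ℕ) : 0 ≤ rescaledKernel k := by
  unfold rescaledKernel; positivity

lemma two_mul_succ_mul_rescaledKernel_succ_le (l : ℕ) :
    2 * (l + 1 : ℝ) * rescaledKernel (l + 1) ≤ rescaledKernel l := by
  have hfac : ((2 * (l + 1) + 1).factorial : ℝ) =
      (2 * l + 3) * (2 * l + 2) * (2 * l + 1).factorial := by
    rw [show 2 * (l + 1) + 1 = (2 * l + 1) + 1 + 1 by ring, Nat.factorial_succ, Nat.factorial_succ]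
    push_cast; ring
  have hpos : (0 : ℝ) < (2 * l + 1).factorial := by exact_mod_cast Nat.factorial_pos _
  unfold rescaledKernel
  rw [hfac, mul_div_assoc', div_le_div_iff₀ (by positivity) hpos]
  calc 2 * (l + 1 : ℝ) * 2 ^ (l + 1) * (2 * l + 1).factorial
      = 2 ^ l * (2 * l + 1).factorial * (4 * l + 4) := by ring
    _ ≤ 2 ^ l * (2 * l + 1).factorial * ((2 * l + 3) * (2 * l + 2)) := by gcongr; nlinarith
    _ = 2 ^ l * ((2 * l + 3) * (2 * l + 2) * (2 * l + 1).factorial) := by ring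

lemma two_mul_rescaledKernel_add_sum_le_one :
    ∀ l : ℕ, 1 ≤ l → 2 * (l : ℝ) * rescaledKernel l + ∑ k ∈ Ico 1 l, rescaledKernel k ≤ 1 := by
  intro l hl
  induction l, hl using Nat.le_induction with
  | base => norm_num [rescaledKernel, Nat.factorial]
  | succ l hl ih =>
    have hl' : (1 : ℝ) ≤ l := by exact_mod_cast hl
    rw [sum_Ico_succ_top hl]
    push_cast
    nlinarith [two_mul_succ_mul_rescaledKernel_succ_le l, rescaledKernel_nonneg l]

lemma two_mul_div_four_pow_mul_factorial (k : ℕ) :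
    (2 * k : ℝ) / (4 ^ k * (2 * k + 1).factorial) = 2 * k * (rescaledKernel k * (1 / 8) ^ k) := by
  have h : (1 / 8 : ℝ) ^ k * 2 ^ k * 4 ^ k = 1 := by rw [← mul_pow, ← mul_pow]; norm_num
  unfold rescaledKernel
  field_simp
  linear_combination -(k : ℝ) * h

lemma two_mul_div_four_pow_mul_factorial_mul_div {k : ℕ} (hk : 0 < k) (y : ℝ) :
    (2 * k : ℝ) / (4 ^ k * (2 * k + 1).factorial) * y / (2 * k) =
      rescaledKernel k * (1 / 8) ^ k * y := by
  have hk' : (0 : ℝ) < k := by exact_mod_cast hk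
  rw [two_mul_div_four_pow_mul_factorial]
  field_simp

lemma hasSum_four_pow_mul_inv_eight_pow :
    HasSum (fun l : ℕ => (4 : ℝ) ^ (l + 1) * (1 / 8) ^ (l + 1)) 1 := by
  convert hasSum_geometric_two' (1 : ℝ) using 2 with l
  rw [← mul_pow, div_div, ← pow_succ', ← one_div_pow]
  norm_num

lemma summable_and_tsum_le_one_of_abs_le_inv_eight_pow {δ : ℕ → ℝ}
    (hδ : ∀ l, 1 ≤ l → |δ l| ≤ (1 / 8) ^ l) :
    Summable (fun l : ℕ => (4 : ℝ) ^ (l + 1) * |δ (l + 1)|) ∧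
      ∑' l : ℕ, (4 : ℝ) ^ (l + 1) * |δ (l + 1)| ≤ 1 := by
  have hle (l : ℕ) : (4 : ℝ) ^ (l + 1) * |δ (l + 1)| ≤ 4 ^ (l + 1) * (1 / 8) ^ (l + 1) :=
    mul_le_mul_of_nonneg_left (hδ (l + 1) l.succ_pos) (by positivity)
  have hsum := hasSum_four_pow_mul_inv_eight_pow
  have hs := hsum.summable.of_nonneg_of_le (fun l => by positivity) hle
  exact ⟨hs, hsum.tsum_eq ▸ hs.tsum_le_tsum hle hsum.summable⟩

theorem stmt_0 (η δ : ℕ → ℝ)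
    (hη : ∀ l : ℕ, η l = (2 * l) / (4 ^ l * Nat.factorial (2 * l + 1)))
    (hδ : ∀ l : ℕ, 1 ≤ l →
      δ l = η l - ∑ b ∈ Finset.Ico 1 l, η (l - b) * δ b / (2 * (l : ℝ) - 2 * b)) :
    Summable (fun l : ℕ => (4 : ℝ) ^ (l + 1) * |δ (l + 1)|) ∧
      ∑' l : ℕ, (4 : ℝ) ^ (l + 1) * |δ (l + 1)| ≤ 6 / 5 := by
  have hη' (l : ℕ) : η l = 2 * l * (rescaledKernel l * (1 / 8) ^ l) := by
    rw [hη, two_mul_div_four_pow_mul_factorial]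
  have hrec (l : ℕ) (hl : 1 ≤ l) :
      δ l = η l - ∑ b ∈ Ico 1 l, rescaledKernel (l - b) * (1 / 8) ^ (l - b) * δ b := by
    rw [hδ l hl]
    refine congrArg _ (sum_congr rfl fun b hb => ?_)
    have hbl : b < l := (mem_Ico.mp hb).2
    rw [show 2 * (l : ℝ) - 2 * b = 2 * (l - b : ℕ) by push_cast [hbl.le]; ring, hη,
      two_mul_div_four_pow_mul_factorial_mul_div (Nat.sub_pos_of_lt hbl)]
  have hbound : ∀ l, 1 ≤ l → |δ l| ≤ (1 / 8) ^ l := by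
    refine abs_le_pow_of_eq_sub_sum (κ := fun k => rescaledKernel k * (1 / 8) ^ k)
      (c := rescaledKernel) hrec (fun k => ?_) (fun l hl => ?_)
    · rw [abs_of_nonneg (mul_nonneg (rescaledKernel_nonneg k) (by positivity))]
    · rw [hη', abs_of_nonneg (by have := rescaledKernel_nonneg l; positivity), ← mul_assoc,
        ← add_mul]
      exact mul_le_of_le_one_left (by positivity) (two_mul_rescaledKernel_add_sum_le_one l hl)
  obtain ⟨hs, htsum⟩ := summable_and_tsum_le_one_of_abs_le_inv_eight_pow hbound
  exact ⟨hs, htsum.trans (by norm_num)⟩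
end

section
/- Let δ̃_l be defined recursively by δ̃_l = 1/(2l)! + Σ_{b=1}^{l−1} δ̃_{l−b}/(2b)! for l ∈ ℕ. Then Σ_{l=1}^∞ δ̃_l ≤ 6/5. -/
open Finset

-- (2b)! ≥ 2 * 12^(b-1) for b ≥ 1
lemma fact_lb : ∀ b : ℕ, 1 ≤ b → 2 * 12 ^ (b - 1) ≤ Nat.factorial (2 * b) := by
  intro b hb
  induction b with
  | zero => omega
  | succ n ih =>
    rcases Nat.eq_or_lt_of_le hb with h | h
    · have hn0 : n = 0 := by omega
      subst hn0
      decide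
    · have hn : 1 ≤ n := by omega
      have ihn := ih hn
      have h2 : 2 * (n + 1) = (2 * n + 1) + 1 := by ring
      rw [h2, Nat.factorial_succ, Nat.factorial_succ]
      have : n + 1 - 1 = (n - 1) + 1 := by omega
      rw [this, pow_succ]
      calc 2 * (12 ^ (n - 1) * 12) = 12 * (2 * 12 ^ (n - 1)) := by ring
        _ ≤ 12 * Nat.factorial (2 * n) := by exact Nat.mul_le_mul_left 12 ihn
        _ ≤ (((2 * n + 1) + 1) * (2 * n + 1)) * Nat.factorial (2 * n) := by
            apply Nat.mul_le_mul_right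
            nlinarith
        _ = ((2 * n + 1) + 1) * ((2 * n + 1) * Nat.factorial (2 * n)) := by ring

lemma fact_inv_le : ∀ b : ℕ, 1 ≤ b →
    (1 : ℝ) / Nat.factorial (2 * b) ≤ (1 / 2) * (1 / 12) ^ (b - 1) := by
  intro b hb
  have h := fact_lb b hb
  have h' : (2 * 12 ^ (b - 1) : ℝ) ≤ Nat.factorial (2 * b) := by exact_mod_cast h
  have hpos : (0 : ℝ) < 2 * 12 ^ (b - 1) := by positivity
  have := one_div_le_one_div_of_le hpos h'
  calc (1 : ℝ) / Nat.factorial (2 * b) ≤ 1 / (2 * 12 ^ (b - 1)) := this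
    _ = (1 / 2) * (1 / 12) ^ (b - 1) := by
        rw [div_pow, one_pow]
        field_simp

lemma sum_fact_inv_le (m : ℕ) :
    ∑ b ∈ Finset.Ico 1 m, (1 : ℝ) / Nat.factorial (2 * b) ≤ 6 / 11 := by
  calc ∑ b ∈ Finset.Ico 1 m, (1 : ℝ) / Nat.factorial (2 * b)
      ≤ ∑ b ∈ Finset.Ico 1 m, (1 / 2 : ℝ) * (1 / 12) ^ (b - 1) := by
        refine Finset.sum_le_sum fun b hb => ?_
        exact fact_inv_le b (Finset.mem_Ico.mp hb).1
    _ = ∑ i ∈ Finset.range (m - 1), (1 / 2 : ℝ) * (1 / 12) ^ i := by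
        rw [Finset.sum_Ico_eq_sum_range]
        simp
    _ = (1 / 2 : ℝ) * ∑ i ∈ Finset.range (m - 1), (1 / 12 : ℝ) ^ i := by
        rw [Finset.mul_sum]
    _ ≤ (1 / 2 : ℝ) * (12 / 11) := by
        have h : (1 / 12 : ℝ) ≠ 1 := by norm_num
        rw [geom_sum_eq h]
        have h1 : (0:ℝ) ≤ (1/12 : ℝ) ^ (m - 1) := by positivity
        have h2 : ((1/12 : ℝ) ^ (m-1) - 1) / (1/12 - 1) = (1 - (1/12:ℝ)^(m-1)) / (11/12) := by
          ring
        rw [h2]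
        have h3 : (1 - (1/12:ℝ)^(m-1)) ≤ 1 := by linarith
        have : (1 - (1/12:ℝ)^(m-1)) / (11/12 : ℝ) ≤ 1 / (11/12 : ℝ) := by
          apply div_le_div_of_nonneg_right h3 (by norm_num) |>.trans_eq rfl
        linarith [this]
    _ = 6 / 11 := by norm_num

theorem stmt_1 (δt : ℕ → ℝ)
    (hδt : ∀ l : ℕ, 1 ≤ l →
      δt l = 1 / Nat.factorial (2 * l) +
        ∑ b ∈ Finset.Ico 1 l, δt (l - b) / Nat.factorial (2 * b)) :
    Summable (fun l : ℕ => δt (l + 1)) ∧ ∑' l : ℕ, δt (l + 1) ≤ 6 / 5 := by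
  -- nonnegativity
  have hnn : ∀ l : ℕ, 1 ≤ l → 0 ≤ δt l := by
    intro l
    induction l using Nat.strong_induction_on with
    | _ l ih =>
      intro hl
      rw [hδt l hl]
      have h1 : (0:ℝ) ≤ 1 / Nat.factorial (2 * l) := by positivity
      have h2 : (0:ℝ) ≤ ∑ b ∈ Finset.Ico 1 l, δt (l - b) / Nat.factorial (2 * b) := by
        refine Finset.sum_nonneg fun b hb => ?_
        obtain ⟨hb1, hb2⟩ := Finset.mem_Ico.mp hb
        have : 0 ≤ δt (l - b) := ih (l - b) (by omega) (by omega)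
        positivity
      linarith
  -- bounded partial sums
  have hS : ∀ n : ℕ, ∑ i ∈ Finset.range n, δt (i + 1) ≤ 6 / 5 := by
    intro n
    induction n using Nat.strong_induction_on with
    | _ n ih =>
      have hrw : ∑ i ∈ Finset.range n, δt (i + 1) = ∑ l ∈ Finset.Ico 1 (n + 1), δt l := by
        rw [Finset.sum_Ico_eq_sum_range]
        simp [add_comm]
      rw [hrw]
      have hrw2 : ∑ l ∈ Finset.Ico 1 (n + 1), δt l =
          ∑ l ∈ Finset.Ico 1 (n + 1), (1 / (Nat.factorial (2 * l) : ℝ) +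
            ∑ b ∈ Finset.Ico 1 l, δt (l - b) / Nat.factorial (2 * b)) := by
        refine Finset.sum_congr rfl fun l hl => ?_
        exact hδt l (Finset.mem_Ico.mp hl).1
      rw [hrw2, Finset.sum_add_distrib]
      have hA := sum_fact_inv_le (n + 1)
      have hB : ∑ l ∈ Finset.Ico 1 (n + 1), ∑ b ∈ Finset.Ico 1 l,
          δt (l - b) / Nat.factorial (2 * b) ≤ 36 / 55 := by
        rw [← Finset.sum_Ico_Ico_comm' 1 (n + 1) (fun b l => δt (l - b) / Nat.factorial (2 * b))]
        have hinner : ∀ b ∈ Finset.Ico 1 (n + 1),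
            ∑ l ∈ Finset.Ico (b + 1) (n + 1), δt (l - b) / (Nat.factorial (2 * b) : ℝ)
              ≤ (6 / 5) * (1 / Nat.factorial (2 * b)) := by
          intro b hb
          obtain ⟨hb1, hb2⟩ := Finset.mem_Ico.mp hb
          have hsum : ∑ l ∈ Finset.Ico (b + 1) (n + 1), δt (l - b)
              = ∑ i ∈ Finset.range (n - b), δt (i + 1) := by
            rw [Finset.sum_Ico_eq_sum_range]
            have h1 : n + 1 - (b + 1) = n - b := by omega
            rw [h1]
            refine Finset.sum_congr rfl fun i _ => ?_
            congr 1
            omega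
          have hle : ∑ l ∈ Finset.Ico (b + 1) (n + 1), δt (l - b) ≤ 6 / 5 := by
            rw [hsum]; exact ih (n - b) (by omega)
          calc ∑ l ∈ Finset.Ico (b + 1) (n + 1), δt (l - b) / (Nat.factorial (2 * b) : ℝ)
              = (∑ l ∈ Finset.Ico (b + 1) (n + 1), δt (l - b)) / (Nat.factorial (2 * b) : ℝ) := by
                rw [Finset.sum_div]
            _ ≤ (6 / 5) / (Nat.factorial (2 * b) : ℝ) := by
                gcongr
            _ = (6 / 5) * (1 / Nat.factorial (2 * b)) := by ring
        calc ∑ b ∈ Finset.Ico 1 (n + 1), ∑ l ∈ Finset.Ico (b + 1) (n + 1),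
              δt (l - b) / (Nat.factorial (2 * b) : ℝ)
            ≤ ∑ b ∈ Finset.Ico 1 (n + 1), (6 / 5) * (1 / (Nat.factorial (2 * b) : ℝ)) :=
              Finset.sum_le_sum hinner
          _ = (6 / 5) * ∑ b ∈ Finset.Ico 1 (n + 1), (1 / (Nat.factorial (2 * b) : ℝ)) := by
              rw [Finset.mul_sum]
          _ ≤ (6 / 5) * (6 / 11) := by
              have := sum_fact_inv_le (n + 1)
              nlinarith
          _ = 36 / 55 := by norm_num
      linarith
  have hnn' : ∀ i : ℕ, 0 ≤ δt (i + 1) := fun i => hnn (i + 1) (by omega)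
  exact ⟨summable_of_sum_range_le hnn' hS, Real.tsum_le_of_sum_range_le hnn' hS⟩
end
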